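/- arXiv:1311.6040 — 2 statements merged into one kernel-verified Lean document; each statement's English description precedes it below -/
import Mathlib

section
/- For distinct points x, y in ℝ^d, positive exponents α, β in (0,d) with α+β>d, and λ>0, there is a constant C (independent of |x-y|) such that ∫_{ℝ^d} e^{-λ|z-x|}|z-x|^{-α} e^{-λ|z-y|}|z-y|^{-β} dz ≤ C e^{-λ|x-y|}(|x-y|^{d-(α+β)}+1). -/
open MeasureTheory Measure Set ENNReal Real

open MeasureTheory Measure Set ENNReal

lemma lintegral_fun_norm_polar {E : Type*} [NormedAddCommGroup E] [NormedSpace ℝ E]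
    [MeasurableSpace E] [BorelSpace E] [FiniteDimensional ℝ E] [Nontrivial E]
    (μ : Measure E) [μ.IsAddHaarMeasure] (f : ℝ → ℝ≥0∞) (hf : Measurable f) :
    ∫⁻ z, f ‖z‖ ∂μ = μ.toSphere univ *
      ∫⁻ y in Ioi (0:ℝ), ENNReal.ofReal (y ^ (Module.finrank ℝ E - 1)) * f y := by
  have h1 : ∫⁻ z, f ‖z‖ ∂μ = ∫⁻ x : ({(0:E)}ᶜ : Set E), f ‖(x:E)‖ ∂(μ.comap (↑)) := by
    rw [lintegral_subtype_comap (measurableSet_singleton (0:E)).compl fun z => f ‖z‖,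
      restrict_compl_singleton]
  have h3 : ∫⁻ x : ({(0:E)}ᶜ : Set E), f ‖(x:E)‖ ∂(μ.comap (↑)) =
      ∫⁻ p : Metric.sphere (0:E) 1 × Ioi (0:ℝ), f p.2
        ∂(μ.toSphere.prod (volumeIoiPow (Module.finrank ℝ E - 1))) := by
    have h := (μ.measurePreserving_homeomorphUnitSphereProd).lintegral_comp
      (f := fun p : Metric.sphere (0:E) 1 × Ioi (0:ℝ) => f p.2)
      (hf.comp (measurable_subtype_coe.comp measurable_snd))
    simpa using h
  have h4 : ∫⁻ p : Metric.sphere (0:E) 1 × Ioi (0:ℝ), f p.2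
        ∂(μ.toSphere.prod (volumeIoiPow (Module.finrank ℝ E - 1))) =
      μ.toSphere univ * ∫⁻ y : Ioi (0:ℝ), f y ∂(volumeIoiPow (Module.finrank ℝ E - 1)) := by
    rw [lintegral_prod (f := fun p : Metric.sphere (0:E) 1 × Ioi (0:ℝ) => f p.2)
      ((hf.comp (measurable_subtype_coe.comp measurable_snd)).aemeasurable)]
    simp [lintegral_const, mul_comm]
  have h5 : ∫⁻ y : Ioi (0:ℝ), f y ∂(volumeIoiPow (Module.finrank ℝ E - 1)) =
      ∫⁻ y in Ioi (0:ℝ), ENNReal.ofReal (y ^ (Module.finrank ℝ E - 1)) * f y := by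
    rw [volumeIoiPow]
    rw [lintegral_withDensity_eq_lintegral_mul _
      (f := fun r : Ioi (0:ℝ) => ENNReal.ofReal ((r:ℝ) ^ (Module.finrank ℝ E - 1)))
      ((measurable_subtype_coe.pow_const _).ennreal_ofReal)
      (g := fun y : Ioi (0:ℝ) => f y) (hf.comp measurable_subtype_coe)]
    exact lintegral_subtype_comap measurableSet_Ioi
      (fun y => ENNReal.ofReal (y ^ (Module.finrank ℝ E - 1)) * f y)
  rw [h1, h3, h4, h5]

lemma nontrivial_euclidean (d : ℕ) (hd : 1 ≤ d) :
    Nontrivial (EuclideanSpace ℝ (Fin d)) := by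
  have : Nonempty (Fin d) := ⟨⟨0, hd⟩⟩
  infer_instance

lemma lintegral_fun_norm_sub (d : ℕ) (hd : 1 ≤ d) (x : EuclideanSpace ℝ (Fin d))
    (f : ℝ → ℝ≥0∞) (hf : Measurable f) :
    ∫⁻ z : EuclideanSpace ℝ (Fin d), f ‖z - x‖ =
      (volume : Measure (EuclideanSpace ℝ (Fin d))).toSphere univ *
        ∫⁻ y in Ioi (0:ℝ), ENNReal.ofReal (y ^ (d - 1)) * f y := by
  haveI := nontrivial_euclidean d hd
  have h1 : ∫⁻ z : EuclideanSpace ℝ (Fin d), f ‖z - x‖ =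
      ∫⁻ z : EuclideanSpace ℝ (Fin d), f ‖z‖ :=
    lintegral_sub_right_eq_self (fun z => f ‖z‖) x
  rw [h1, lintegral_fun_norm_polar _ f hf, finrank_euclideanSpace_fin]

open MeasureTheory Measure Set ENNReal Real

lemma nat_pow_rpow {y : ℝ} (hy : 0 < y) (n : ℕ) (hn : 1 ≤ n) (a : ℝ) :
    y ^ (n - 1) * y ^ (-a) = y ^ ((n:ℝ) - 1 - a) := by
  have h1 : (y : ℝ) ^ (n - 1) = y ^ (((n:ℝ) - 1)) := by
    rw [← Real.rpow_natCast y (n - 1), Nat.cast_sub hn, Nat.cast_one]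
  rw [h1, ← Real.rpow_add hy]
  ring_nf

lemma lin_piece_ball (n : ℕ) (hn : 1 ≤ n) (R a c : ℝ) (hR : 0 < R) (ha : 0 < a)
    (han : a < n) (hc : 0 ≤ c) :
    (∫⁻ y in Ioi (0:ℝ), ENNReal.ofReal (y ^ (n - 1)) *
      ENNReal.ofReal (if y < R then c * y ^ (-a) else 0))
    ≤ ENNReal.ofReal (c * (R ^ ((n:ℝ) - a) / ((n:ℝ) - a))) := by
  have hna : (0:ℝ) < (n:ℝ) - a := by linarith
  have hp : (-1:ℝ) < (n:ℝ) - 1 - a := by linarith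
  calc ∫⁻ y in Ioi (0:ℝ), ENNReal.ofReal (y ^ (n - 1)) *
        ENNReal.ofReal (if y < R then c * y ^ (-a) else 0)
      = ∫⁻ y in Ioi (0:ℝ),
          (Ioo (0:ℝ) R).indicator (fun y => ENNReal.ofReal (c * y ^ ((n:ℝ) - 1 - a))) y := by
        refine setLIntegral_congr_fun measurableSet_Ioi (fun y hy => ?_)
        have hy0 : 0 < y := hy
        by_cases hyR : y < R
        · rw [if_pos hyR, indicator_of_mem (by exact ⟨hy0, hyR⟩), ← ENNReal.ofReal_mul
            (by positivity)]
          congr 1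
          rw [mul_comm c, ← mul_assoc, nat_pow_rpow hy0 n hn a]
          ring
        · rw [if_neg hyR, indicator_of_notMem (fun h => hyR h.2)]
          simp
    _ ≤ ∫⁻ y, (Ioo (0:ℝ) R).indicator (fun y => ENNReal.ofReal (c * y ^ ((n:ℝ) - 1 - a))) y :=
        setLIntegral_le_lintegral _ _
    _ = ∫⁻ y in Ioo (0:ℝ) R, ENNReal.ofReal (c * y ^ ((n:ℝ) - 1 - a)) :=
        lintegral_indicator measurableSet_Ioo _
    _ = ENNReal.ofReal (∫ y in Ioo (0:ℝ) R, c * y ^ ((n:ℝ) - 1 - a)) := by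
        refine (ofReal_integral_eq_lintegral_ofReal ?_ ?_).symm
        · have h1 : IntervalIntegrable (fun y : ℝ => y ^ ((n:ℝ) - 1 - a)) volume 0 R :=
            intervalIntegral.intervalIntegrable_rpow' hp
          rw [intervalIntegrable_iff_integrableOn_Ioo_of_le hR.le] at h1
          exact h1.const_mul c
        · filter_upwards [ae_restrict_mem measurableSet_Ioo] with y hy
          have : (0:ℝ) ≤ y := hy.1.le
          positivity
    _ ≤ ENNReal.ofReal (c * (R ^ ((n:ℝ) - a) / ((n:ℝ) - a))) := by
        rw [MeasureTheory.integral_const_mul]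
        refine ENNReal.ofReal_le_ofReal ?_
        rw [← integral_Ioc_eq_integral_Ioo, ← intervalIntegral.integral_of_le hR.le,
          integral_rpow (Or.inl hp)]
        rw [Real.zero_rpow (by linarith : (n:ℝ) - 1 - a + 1 ≠ 0)]
        have : (n:ℝ) - 1 - a + 1 = (n:ℝ) - a := by ring
        rw [this, sub_zero]

lemma lin_piece_tail (n : ℕ) (hn : 1 ≤ n) (R c γ ν : ℝ) (hR : 0 < R) (hγ : (n:ℝ) < γ)
    (hc : 0 ≤ c) (hν : 0 ≤ ν) :
    (∫⁻ y in Ioi (0:ℝ), ENNReal.ofReal (y ^ (n - 1)) *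
      ENNReal.ofReal (if y < R then 0 else c * (Real.exp (-ν * y) * y ^ (-γ))))
    ≤ ENNReal.ofReal (c * (R ^ ((n:ℝ) - γ) / (γ - (n:ℝ)))) := by
  have hp : (n:ℝ) - 1 - γ < -1 := by linarith
  calc ∫⁻ y in Ioi (0:ℝ), ENNReal.ofReal (y ^ (n - 1)) *
        ENNReal.ofReal (if y < R then 0 else c * (Real.exp (-ν * y) * y ^ (-γ)))
      ≤ ∫⁻ y in Ioi (0:ℝ),
          (Ici R).indicator (fun y => ENNReal.ofReal (c * y ^ ((n:ℝ) - 1 - γ))) y := by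
        refine setLIntegral_mono' measurableSet_Ioi fun y hy => ?_
        have hy0 : 0 < y := hy
        by_cases hyR : y < R
        · rw [if_pos hyR]
          simp
        · push_neg at hyR
          rw [if_neg (not_lt.mpr hyR), indicator_of_mem (mem_Ici.mpr hyR), ← ENNReal.ofReal_mul
            (by positivity)]
          refine ENNReal.ofReal_le_ofReal ?_
          have hexp : Real.exp (-ν * y) ≤ 1 := by
            rw [Real.exp_le_one_iff]
            nlinarith
          calc y ^ (n - 1) * (c * (Real.exp (-ν * y) * y ^ (-γ)))
              ≤ y ^ (n - 1) * (c * (1 * y ^ (-γ))) := by gcongr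
            _ = c * (y ^ (n - 1) * y ^ (-γ)) := by ring
            _ = c * y ^ ((n:ℝ) - 1 - γ) := by rw [nat_pow_rpow hy0 n hn γ]
    _ ≤ ∫⁻ y, (Ici R).indicator (fun y => ENNReal.ofReal (c * y ^ ((n:ℝ) - 1 - γ))) y :=
        setLIntegral_le_lintegral _ _
    _ = ∫⁻ y in Ici R, ENNReal.ofReal (c * y ^ ((n:ℝ) - 1 - γ)) :=
        lintegral_indicator measurableSet_Ici _
    _ = ∫⁻ y in Ioi R, ENNReal.ofReal (c * y ^ ((n:ℝ) - 1 - γ)) := by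
        rw [← restrict_congr_set Ioi_ae_eq_Ici]
    _ = ENNReal.ofReal (∫ y in Ioi R, c * y ^ ((n:ℝ) - 1 - γ)) := by
        refine (ofReal_integral_eq_lintegral_ofReal ?_ ?_).symm
        · exact (integrableOn_Ioi_rpow_of_lt hp hR).const_mul c
        · filter_upwards [ae_restrict_mem measurableSet_Ioi] with y hy
          have : (0:ℝ) < y := lt_trans hR hy
          positivity
    _ ≤ ENNReal.ofReal (c * (R ^ ((n:ℝ) - γ) / (γ - (n:ℝ)))) := by
        rw [MeasureTheory.integral_const_mul, integral_Ioi_rpow_of_lt hp hR]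
        refine ENNReal.ofReal_le_ofReal (le_of_eq ?_)
        have h1 : (n:ℝ) - 1 - γ + 1 = (n:ℝ) - γ := by ring
        have h2 : (n:ℝ) - γ ≠ 0 := by linarith
        have h3 : γ - (n:ℝ) ≠ 0 := by linarith
        rw [h1]
        field_simp
        ring

open Real

lemma pointwise_bound (α β ν r a b : ℝ) (hα : 0 < α) (hβ : 0 < β) (hν : 0 < ν)
    (hr : 0 < r) (ha : 0 ≤ a) (hb : 0 ≤ b) (hab : r ≤ a + b) (hba : a ≤ b + r) :
    Real.exp (-ν * a) * a ^ (-α) * (Real.exp (-ν * b) * b ^ (-β)) ≤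
      Real.exp (-ν * r) *
        ((if a < 2 * r then (r / 2) ^ (-β) * a ^ (-α) else 0)
          + (if b < 2 * r then (r / 2) ^ (-α) * b ^ (-β) else 0)
          + (if a < 2 * r then 0 else (2:ℝ) ^ β * (Real.exp (-ν * a) * a ^ (-(α + β))))) := by
  have hexpr : (0:ℝ) < Real.exp (-ν * r) := Real.exp_pos _
  have ht1 : (0:ℝ) ≤ (if a < 2 * r then (r / 2) ^ (-β) * a ^ (-α) else 0) := by
    split <;> positivity
  have ht2 : (0:ℝ) ≤ (if b < 2 * r then (r / 2) ^ (-α) * b ^ (-β) else 0) := by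
    split <;> positivity
  have ht3 : (0:ℝ) ≤ (if a < 2 * r then 0 else (2:ℝ) ^ β * (Real.exp (-ν * a) * a ^ (-(α + β)))) := by
    split <;> positivity
  by_cases hc : a < 2 * r
  · by_cases hab2 : a ≤ b
    · -- main term: t1
      have hb2 : r / 2 ≤ b := by linarith
      have key : Real.exp (-ν * a) * a ^ (-α) * (Real.exp (-ν * b) * b ^ (-β)) ≤
          Real.exp (-ν * r) * ((r / 2) ^ (-β) * a ^ (-α)) := by
        have hE : Real.exp (-ν * a) * Real.exp (-ν * b) = Real.exp (-(ν * (a + b))) := by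
          rw [← Real.exp_add]; ring_nf
        have hEle : Real.exp (-(ν * (a + b))) ≤ Real.exp (-ν * r) := by
          apply Real.exp_le_exp.mpr; nlinarith
        have hble : b ^ (-β) ≤ (r / 2) ^ (-β) :=
          Real.rpow_le_rpow_of_nonpos (by linarith) hb2 (by linarith)
        calc Real.exp (-ν * a) * a ^ (-α) * (Real.exp (-ν * b) * b ^ (-β))
            = (Real.exp (-ν * a) * Real.exp (-ν * b)) * (a ^ (-α) * b ^ (-β)) := by ring
          _ = Real.exp (-(ν * (a + b))) * (a ^ (-α) * b ^ (-β)) := by rw [hE]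
          _ ≤ Real.exp (-ν * r) * (a ^ (-α) * (r / 2) ^ (-β)) := by
              apply mul_le_mul hEle ?_ (by positivity) (by positivity)
              exact mul_le_mul_of_nonneg_left hble (by positivity)
          _ = Real.exp (-ν * r) * ((r / 2) ^ (-β) * a ^ (-α)) := by ring
      simp only [if_pos hc] at ht1 ⊢
      nlinarith [mul_le_mul_of_nonneg_left (by linarith : (r / 2) ^ (-β) * a ^ (-α) ≤
        (r / 2) ^ (-β) * a ^ (-α) + ((if b < 2 * r then (r / 2) ^ (-α) * b ^ (-β) else 0)
          + 0)) hexpr.le]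
    · push_neg at hab2
      have hb2r : b < 2 * r := by linarith
      have ha2 : r / 2 ≤ a := by linarith
      have key : Real.exp (-ν * a) * a ^ (-α) * (Real.exp (-ν * b) * b ^ (-β)) ≤
          Real.exp (-ν * r) * ((r / 2) ^ (-α) * b ^ (-β)) := by
        have hE : Real.exp (-ν * a) * Real.exp (-ν * b) = Real.exp (-(ν * (a + b))) := by
          rw [← Real.exp_add]; ring_nf
        have hEle : Real.exp (-(ν * (a + b))) ≤ Real.exp (-ν * r) := by
          apply Real.exp_le_exp.mpr; nlinarith
        have hale : a ^ (-α) ≤ (r / 2) ^ (-α) :=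
          Real.rpow_le_rpow_of_nonpos (by linarith) ha2 (by linarith)
        calc Real.exp (-ν * a) * a ^ (-α) * (Real.exp (-ν * b) * b ^ (-β))
            = (Real.exp (-ν * a) * Real.exp (-ν * b)) * (a ^ (-α) * b ^ (-β)) := by ring
          _ = Real.exp (-(ν * (a + b))) * (a ^ (-α) * b ^ (-β)) := by rw [hE]
          _ ≤ Real.exp (-ν * r) * ((r / 2) ^ (-α) * b ^ (-β)) := by
              apply mul_le_mul hEle ?_ (by positivity) (by positivity)
              exact mul_le_mul_of_nonneg_right hale (by positivity)
      simp only [if_pos hb2r, if_pos hc] at ht1 ht2 ⊢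
      nlinarith [mul_le_mul_of_nonneg_left (by linarith : (r / 2) ^ (-α) * b ^ (-β) ≤
        (r / 2) ^ (-β) * a ^ (-α) + ((r / 2) ^ (-α) * b ^ (-β) + 0)) hexpr.le]
  · push_neg at hc
    have ha0 : 0 < a := by linarith
    have hbar : a - r ≤ b := by linarith
    have hbr : r ≤ b := by linarith
    have hab2 : a / 2 ≤ b := by linarith
    have key : Real.exp (-ν * a) * a ^ (-α) * (Real.exp (-ν * b) * b ^ (-β)) ≤
        Real.exp (-ν * r) * ((2:ℝ) ^ β * (Real.exp (-ν * a) * a ^ (-(α + β)))) := by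
      have hble : b ^ (-β) ≤ (2:ℝ) ^ β * a ^ (-β) := by
        have h1 : b ^ (-β) ≤ (a / 2) ^ (-β) :=
          Real.rpow_le_rpow_of_nonpos (by linarith) hab2 (by linarith)
        have h2 : (a / 2) ^ (-β) = (2:ℝ) ^ β * a ^ (-β) := by
          rw [Real.div_rpow ha0.le (by norm_num : (0:ℝ) ≤ 2),
            Real.rpow_neg (by norm_num : (0:ℝ) ≤ 2), div_inv_eq_mul]
          ring
        linarith
      have hEle : Real.exp (-ν * b) ≤ Real.exp (-ν * r) := by
        apply Real.exp_le_exp.mpr; nlinarith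
      have hsplit : a ^ (-(α + β)) = a ^ (-α) * a ^ (-β) := by
        rw [← Real.rpow_add ha0]; ring_nf
      calc Real.exp (-ν * a) * a ^ (-α) * (Real.exp (-ν * b) * b ^ (-β))
          = (Real.exp (-ν * a) * a ^ (-α)) * (Real.exp (-ν * b) * b ^ (-β)) := by ring
        _ ≤ (Real.exp (-ν * a) * a ^ (-α)) * (Real.exp (-ν * r) * ((2:ℝ) ^ β * a ^ (-β))) := by
            apply mul_le_mul_of_nonneg_left ?_ (by positivity)
            exact mul_le_mul hEle hble (by positivity) (by positivity)
        _ = Real.exp (-ν * r) * ((2:ℝ) ^ β * (Real.exp (-ν * a) * (a ^ (-α) * a ^ (-β)))) := by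
            ring
        _ = Real.exp (-ν * r) * ((2:ℝ) ^ β * (Real.exp (-ν * a) * a ^ (-(α + β)))) := by
            rw [hsplit]
    simp only [if_neg (not_lt.mpr hc)] at ht3 ⊢
    nlinarith [mul_le_mul_of_nonneg_left (by linarith : (2:ℝ) ^ β * (Real.exp (-ν * a) * a ^ (-(α + β))) ≤
      0 + ((if b < 2 * r then (r / 2) ^ (-α) * b ^ (-β) else 0)
        + (2:ℝ) ^ β * (Real.exp (-ν * a) * a ^ (-(α + β))))) hexpr.le]



open MeasureTheory Real

theorem convolution_lemma_supercritical (d : ℕ) (hd : 1 ≤ d) (α β ν : ℝ)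
    (hα : 0 < α) (hαd : α < d) (hβ : 0 < β) (hβd : β < d)
    (hαβ : (d : ℝ) < α + β) (hν : 0 < ν) :
    ∃ C > 0, ∀ x y : EuclideanSpace ℝ (Fin d), x ≠ y →
      (∫ z : EuclideanSpace ℝ (Fin d),
          Real.exp (-ν * ‖z - x‖) * ‖z - x‖ ^ (-α) *
            (Real.exp (-ν * ‖z - y‖) * ‖z - y‖ ^ (-β)))
        ≤ C * Real.exp (-ν * ‖x - y‖) * (‖x - y‖ ^ ((d : ℝ) - (α + β)) + 1) := by
  haveI := nontrivial_euclidean d hd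
  set κ : ℝ≥0∞ := (volume : Measure (EuclideanSpace ℝ (Fin d))).toSphere Set.univ with hκdef
  have hκtop : κ ≠ ⊤ := measure_ne_top _ _
  have hκ0 : 0 ≤ κ.toReal := ENNReal.toReal_nonneg
  have hdα : (0:ℝ) < (d:ℝ) - α := by linarith
  have hdβ : (0:ℝ) < (d:ℝ) - β := by linarith
  have hαβd : (0:ℝ) < α + β - (d:ℝ) := by linarith
  set K : ℝ := (2:ℝ) ^ β * (2:ℝ) ^ ((d:ℝ) - α) / ((d:ℝ) - α)
      + (2:ℝ) ^ α * (2:ℝ) ^ ((d:ℝ) - β) / ((d:ℝ) - β)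
      + (2:ℝ) ^ β * (2:ℝ) ^ ((d:ℝ) - (α + β)) / (α + β - (d:ℝ)) with hKdef
  have hK : 0 ≤ K := by positivity
  refine ⟨κ.toReal * K + 1, by positivity, fun x y hxy => ?_⟩
  set r : ℝ := ‖x - y‖ with hrdef
  have hr : 0 < r := by
    rw [hrdef, norm_pos_iff]
    exact sub_ne_zero.mpr hxy
  set s : ℝ := (d:ℝ) - (α + β) with hsdef
  have hrs : (0:ℝ) ≤ r ^ s := by positivity
  set φ1 : ℝ → ℝ := fun t => if t < 2 * r then (r / 2) ^ (-β) * t ^ (-α) else 0 with hφ1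
  set φ2 : ℝ → ℝ := fun t => if t < 2 * r then (r / 2) ^ (-α) * t ^ (-β) else 0 with hφ2
  set φ3 : ℝ → ℝ := fun t => if t < 2 * r then 0 else
      (2:ℝ) ^ β * (Real.exp (-ν * t) * t ^ (-(α + β))) with hφ3
  have hφ1m : Measurable fun t : ℝ => ENNReal.ofReal (φ1 t) := by
    apply Measurable.ennreal_ofReal
    exact Measurable.ite measurableSet_Iio (by fun_prop) measurable_const
  have hφ2m : Measurable fun t : ℝ => ENNReal.ofReal (φ2 t) := by
    apply Measurable.ennreal_ofReal
    exact Measurable.ite measurableSet_Iio (by fun_prop) measurable_const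
  have hφ3m : Measurable fun t : ℝ => ENNReal.ofReal (φ3 t) := by
    apply Measurable.ennreal_ofReal
    exact Measurable.ite measurableSet_Iio measurable_const (by fun_prop)
  have hφ1nn : ∀ t : ℝ, 0 ≤ t → 0 ≤ φ1 t := fun t ht => by
    rw [hφ1]; dsimp only; split <;> positivity
  have hφ2nn : ∀ t : ℝ, 0 ≤ t → 0 ≤ φ2 t := fun t ht => by
    rw [hφ2]; dsimp only; split <;> positivity
  have hφ3nn : ∀ t : ℝ, 0 ≤ t → 0 ≤ φ3 t := fun t ht => by
    rw [hφ3]; dsimp only; split <;> positivity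
  set f : EuclideanSpace ℝ (Fin d) → ℝ := fun z =>
    Real.exp (-ν * ‖z - x‖) * ‖z - x‖ ^ (-α) *
      (Real.exp (-ν * ‖z - y‖) * ‖z - y‖ ^ (-β)) with hfdef
  have hfnn : ∀ z, 0 ≤ f z := fun z => by
    rw [hfdef]; dsimp only; positivity
  have hfm : Measurable f := by
    rw [hfdef]; fun_prop
  have hgoal : (∫ z, f z) ≤ (κ.toReal * K + 1) * Real.exp (-ν * r) * (r ^ s + 1) := by
    rw [integral_eq_lintegral_of_nonneg_ae (ae_of_all _ hfnn) hfm.aestronglyMeasurable]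
    apply ENNReal.toReal_le_of_le_ofReal (by positivity)
    -- abbreviations for the three pieces and their bounds
    set B1 : ℝ := (r / 2) ^ (-β) * ((2 * r) ^ ((d:ℝ) - α) / ((d:ℝ) - α)) with hB1
    set B2 : ℝ := (r / 2) ^ (-α) * ((2 * r) ^ ((d:ℝ) - β) / ((d:ℝ) - β)) with hB2
    set B3 : ℝ := (2:ℝ) ^ β * ((2 * r) ^ ((d:ℝ) - (α + β)) / (α + β - (d:ℝ))) with hB3
    have hB1nn : 0 ≤ B1 := by rw [hB1]; positivity
    have hB2nn : 0 ≤ B2 := by rw [hB2]; positivity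
    have hB3nn : 0 ≤ B3 := by rw [hB3]; positivity
    have hb1 : (∫⁻ z : EuclideanSpace ℝ (Fin d), ENNReal.ofReal (φ1 ‖z - x‖)) ≤
        κ * ENNReal.ofReal B1 := by
      rw [lintegral_fun_norm_sub d hd x _ hφ1m]
      gcongr
      rw [hφ1, hB1]
      exact lin_piece_ball d hd (2 * r) α ((r / 2) ^ (-β)) (by linarith) hα hαd (by positivity)
    have hb2 : (∫⁻ z : EuclideanSpace ℝ (Fin d), ENNReal.ofReal (φ2 ‖z - y‖)) ≤
        κ * ENNReal.ofReal B2 := by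
      rw [lintegral_fun_norm_sub d hd y _ hφ2m]
      gcongr
      rw [hφ2, hB2]
      exact lin_piece_ball d hd (2 * r) β ((r / 2) ^ (-α)) (by linarith) hβ hβd (by positivity)
    have hb3 : (∫⁻ z : EuclideanSpace ℝ (Fin d), ENNReal.ofReal (φ3 ‖z - x‖)) ≤
        κ * ENNReal.ofReal B3 := by
      rw [lintegral_fun_norm_sub d hd x _ hφ3m]
      gcongr
      rw [hφ3, hB3]
      exact lin_piece_tail d hd (2 * r) ((2:ℝ) ^ β) (α + β) ν (by linarith) hαβ
        (by positivity) hν.le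
    -- algebra: B1 + B2 + B3 = K * r ^ s
    have e0 : ∀ γ : ℝ, (r / 2) ^ (-γ) = r ^ (-γ) * (2:ℝ) ^ γ := fun γ => by
      rw [Real.div_rpow hr.le (by norm_num : (0:ℝ) ≤ 2),
        Real.rpow_neg (by norm_num : (0:ℝ) ≤ 2), div_inv_eq_mul]
    have em : ∀ p : ℝ, ((2:ℝ) * r) ^ p = (2:ℝ) ^ p * r ^ p := fun p =>
      Real.mul_rpow (by norm_num) hr.le
    have ec1 : r ^ (-β) * r ^ ((d:ℝ) - α) = r ^ s := by
      rw [← Real.rpow_add hr]; congr 1; rw [hsdef]; ring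
    have ec2 : r ^ (-α) * r ^ ((d:ℝ) - β) = r ^ s := by
      rw [← Real.rpow_add hr]; congr 1; rw [hsdef]; ring
    have t1 : (r / 2) ^ (-β) * ((2 * r) ^ ((d:ℝ) - α) / ((d:ℝ) - α)) =
        ((2:ℝ) ^ β * (2:ℝ) ^ ((d:ℝ) - α) / ((d:ℝ) - α)) * r ^ s := by
      rw [e0 β, em ((d:ℝ) - α)]
      calc (r ^ (-β) * (2:ℝ) ^ β) * (((2:ℝ) ^ ((d:ℝ) - α) * r ^ ((d:ℝ) - α)) / ((d:ℝ) - α))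
          = ((2:ℝ) ^ β * (2:ℝ) ^ ((d:ℝ) - α) / ((d:ℝ) - α)) * (r ^ (-β) * r ^ ((d:ℝ) - α)) := by
            ring
        _ = ((2:ℝ) ^ β * (2:ℝ) ^ ((d:ℝ) - α) / ((d:ℝ) - α)) * r ^ s := by rw [ec1]
    have t2 : (r / 2) ^ (-α) * ((2 * r) ^ ((d:ℝ) - β) / ((d:ℝ) - β)) =
        ((2:ℝ) ^ α * (2:ℝ) ^ ((d:ℝ) - β) / ((d:ℝ) - β)) * r ^ s := by
      rw [e0 α, em ((d:ℝ) - β)]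
      calc (r ^ (-α) * (2:ℝ) ^ α) * (((2:ℝ) ^ ((d:ℝ) - β) * r ^ ((d:ℝ) - β)) / ((d:ℝ) - β))
          = ((2:ℝ) ^ α * (2:ℝ) ^ ((d:ℝ) - β) / ((d:ℝ) - β)) * (r ^ (-α) * r ^ ((d:ℝ) - β)) := by
            ring
        _ = ((2:ℝ) ^ α * (2:ℝ) ^ ((d:ℝ) - β) / ((d:ℝ) - β)) * r ^ s := by rw [ec2]
    have t3 : (2:ℝ) ^ β * ((2 * r) ^ ((d:ℝ) - (α + β)) / (α + β - (d:ℝ))) =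
        ((2:ℝ) ^ β * (2:ℝ) ^ ((d:ℝ) - (α + β)) / (α + β - (d:ℝ))) * r ^ s := by
      rw [show (d:ℝ) - (α + β) = s from rfl, em s]
      ring
    have halg : B1 + B2 + B3 = K * r ^ s := by
      rw [hB1, hB2, hB3, t1, t2, t3, hKdef]
      ring
    calc ∫⁻ z, ENNReal.ofReal (f z)
        ≤ ∫⁻ z : EuclideanSpace ℝ (Fin d), ENNReal.ofReal (Real.exp (-ν * r) *
            (φ1 ‖z - x‖ + φ2 ‖z - y‖ + φ3 ‖z - x‖)) := by
          apply lintegral_mono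
          intro z
          apply ENNReal.ofReal_le_ofReal
          have hab : r ≤ ‖z - x‖ + ‖z - y‖ := by
            calc r = ‖(x - z) + (z - y)‖ := by rw [sub_add_sub_cancel]
              _ ≤ ‖x - z‖ + ‖z - y‖ := norm_add_le _ _
              _ = ‖z - x‖ + ‖z - y‖ := by rw [norm_sub_rev]
          have hba : ‖z - x‖ ≤ ‖z - y‖ + r := by
            calc ‖z - x‖ = ‖(z - y) + (y - x)‖ := by rw [sub_add_sub_cancel]
              _ ≤ ‖z - y‖ + ‖y - x‖ := norm_add_le _ _
              _ = ‖z - y‖ + r := by rw [norm_sub_rev y x, ← hrdef]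
          rw [hfdef, hφ1, hφ2, hφ3]
          exact pointwise_bound α β ν r ‖z - x‖ ‖z - y‖ hα hβ hν hr
            (norm_nonneg _) (norm_nonneg _) hab hba
      _ = ENNReal.ofReal (Real.exp (-ν * r)) *
            ((∫⁻ z : EuclideanSpace ℝ (Fin d), ENNReal.ofReal (φ1 ‖z - x‖))
              + (∫⁻ z : EuclideanSpace ℝ (Fin d), ENNReal.ofReal (φ2 ‖z - y‖))
              + (∫⁻ z : EuclideanSpace ℝ (Fin d), ENNReal.ofReal (φ3 ‖z - x‖))) := by
          have heq : ∀ z : EuclideanSpace ℝ (Fin d),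
              ENNReal.ofReal (Real.exp (-ν * r) * (φ1 ‖z - x‖ + φ2 ‖z - y‖ + φ3 ‖z - x‖)) =
              ENNReal.ofReal (Real.exp (-ν * r)) *
                (ENNReal.ofReal (φ1 ‖z - x‖) + ENNReal.ofReal (φ2 ‖z - y‖)
                  + ENNReal.ofReal (φ3 ‖z - x‖)) := fun z => by
            rw [ENNReal.ofReal_mul (Real.exp_nonneg _),
              ENNReal.ofReal_add
                (add_nonneg (hφ1nn _ (norm_nonneg _)) (hφ2nn _ (norm_nonneg _)))
                (hφ3nn _ (norm_nonneg _)),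
              ENNReal.ofReal_add (hφ1nn _ (norm_nonneg _)) (hφ2nn _ (norm_nonneg _))]
          simp_rw [heq]
          rw [lintegral_const_mul' _ _ ENNReal.ofReal_ne_top]
          congr 1
          rw [lintegral_add_left (show Measurable fun z : EuclideanSpace ℝ (Fin d) =>
                ENNReal.ofReal (φ1 ‖z - x‖) + ENNReal.ofReal (φ2 ‖z - y‖) from
                (hφ1m.comp (by fun_prop)).add (hφ2m.comp (by fun_prop))),
            lintegral_add_left (show Measurable fun z : EuclideanSpace ℝ (Fin d) =>
                ENNReal.ofReal (φ1 ‖z - x‖) from hφ1m.comp (by fun_prop))]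
      _ ≤ ENNReal.ofReal (Real.exp (-ν * r)) * (κ * ENNReal.ofReal B1
            + κ * ENNReal.ofReal B2 + κ * ENNReal.ofReal B3) := by
          gcongr
      _ = ENNReal.ofReal (Real.exp (-ν * r)) * (κ * ENNReal.ofReal (K * r ^ s)) := by
          have hsum : κ * ENNReal.ofReal B1 + κ * ENNReal.ofReal B2 + κ * ENNReal.ofReal B3
              = κ * ENNReal.ofReal (K * r ^ s) := by
            rw [← mul_add, ← mul_add, ← ENNReal.ofReal_add hB1nn hB2nn,
              ← ENNReal.ofReal_add (add_nonneg hB1nn hB2nn) hB3nn, halg]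
          rw [hsum]
      _ = ENNReal.ofReal (Real.exp (-ν * r) * (κ.toReal * (K * r ^ s))) := by
          rw [ENNReal.ofReal_mul (Real.exp_nonneg _), ENNReal.ofReal_mul hκ0,
            ENNReal.ofReal_toReal hκtop]
      _ ≤ ENNReal.ofReal ((κ.toReal * K + 1) * Real.exp (-ν * r) * (r ^ s + 1)) := by
          apply ENNReal.ofReal_le_ofReal
          have he : 0 < Real.exp (-ν * r) := Real.exp_pos _
          nlinarith [he, mul_nonneg (mul_nonneg hκ0 hK) he.le, mul_nonneg he.le hrs]
  exact hgoal
end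

section
/- Let ν > 0 and d ≥ 3. There is a constant C such that for all y₂ ∈ ℝ^d with y₂ ≠ 0, ∫_{ℝ^d} e^{-ν|y₁|} |y₁|^{-(d-1)} e^{-ν|y₁ - y₂|} |y₁ - y₂|^{-(d-1)} dy₁ ≤ C e^{-ν'|y₂|} (1 + |y₂|^{-(d-2)}) for some ν' > 0. -/
open MeasureTheory Real Set Metric
open scoped ENNReal NNReal

noncomputable section

lemma lintegral_norm_aux (d : ℕ) (hd : 1 ≤ d) (f : ℝ → ℝ≥0∞) (hf : Measurable f) :
    ∫⁻ x : EuclideanSpace ℝ (Fin d), f ‖x‖ =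
      (volume : Measure (EuclideanSpace ℝ (Fin d))).toSphere Set.univ *
        ∫⁻ y in Set.Ioi (0:ℝ),
          ENNReal.ofReal (y ^ (Module.finrank ℝ (EuclideanSpace ℝ (Fin d)) - 1)) * f y := by
  haveI : Nonempty (Fin d) := ⟨⟨0, hd⟩⟩
  haveI : Nontrivial (EuclideanSpace ℝ (Fin d)) := inferInstance
  set μ : Measure (EuclideanSpace ℝ (Fin d)) := volume
  set n := Module.finrank ℝ (EuclideanSpace ℝ (Fin d)) - 1 with hn
  calc
    ∫⁻ x : EuclideanSpace ℝ (Fin d), f ‖x‖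
        = ∫⁻ x in ({0}ᶜ : Set (EuclideanSpace ℝ (Fin d))), f ‖x‖ ∂μ := by
          rw [restrict_compl_singleton]
    _ = ∫⁻ x : (({0}ᶜ : Set (EuclideanSpace ℝ (Fin d))) : Set _), f ‖(x : EuclideanSpace ℝ (Fin d))‖
          ∂(μ.comap Subtype.val) := by
          exact (lintegral_subtype_comap (measurableSet_singleton 0).compl _).symm
    _ = ∫⁻ p : sphere (0 : EuclideanSpace ℝ (Fin d)) 1 × Ioi (0:ℝ), f p.2
          ∂(μ.toSphere.prod (.volumeIoiPow n)) := by
          rw [← μ.measurePreserving_homeomorphUnitSphereProd.lintegral_comp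
            (f := fun p => f p.2.1) (hf.comp (measurable_subtype_coe.comp measurable_snd))]
          simp
    _ = μ.toSphere Set.univ * ∫⁻ r : Ioi (0:ℝ), f r ∂(Measure.volumeIoiPow n) := by
          have h1 := lintegral_prod (μ := μ.toSphere) (ν := Measure.volumeIoiPow n)
            (fun p => f p.2.1) ((hf.comp (measurable_subtype_coe.comp measurable_snd)).aemeasurable)
          rw [h1]
          simp [lintegral_const, mul_comm]
    _ = μ.toSphere Set.univ * ∫⁻ y in Set.Ioi (0:ℝ), ENNReal.ofReal (y ^ n) * f y := by
          rw [Measure.volumeIoiPow, lintegral_withDensity_eq_lintegral_mul _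
            ((measurable_subtype_coe.pow_const n).ennreal_ofReal)
            (g := fun r => f r.1) (hf.comp measurable_subtype_coe)]
          rw [← lintegral_subtype_comap measurableSet_Ioi (fun y => ENNReal.ofReal (y ^ n) * f y)]
          rfl

lemma lintegral_ball_aux (d : ℕ) (hd : 3 ≤ d) {R : ℝ} (hR : 0 < R) :
    ∫⁻ x : EuclideanSpace ℝ (Fin d),
        (Set.Ioo (0:ℝ) R).indicator (fun t => ENNReal.ofReal (t ^ (-((d:ℝ)-1)))) ‖x‖ =
      (volume : Measure (EuclideanSpace ℝ (Fin d))).toSphere Set.univ * ENNReal.ofReal R := by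
  have hmeas : Measurable fun t : ℝ => ENNReal.ofReal (t ^ (-((d:ℝ)-1))) :=
    by fun_prop
  rw [lintegral_norm_aux d (by omega) _ (hmeas.indicator measurableSet_Ioo)]
  congr 1
  have hfr : Module.finrank ℝ (EuclideanSpace ℝ (Fin d)) = d := finrank_euclideanSpace_fin
  rw [hfr]
  have hpt : ∀ y : ℝ, ENNReal.ofReal (y ^ (d - 1)) *
      (Set.Ioo (0:ℝ) R).indicator (fun t => ENNReal.ofReal (t ^ (-((d:ℝ)-1)))) y =
      (Set.Ioo (0:ℝ) R).indicator
        (fun t => ENNReal.ofReal (t ^ (d - 1)) * ENNReal.ofReal (t ^ (-((d:ℝ)-1)))) y := by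
    intro y
    by_cases hy : y ∈ Set.Ioo (0:ℝ) R <;> simp [hy]
  rw [lintegral_congr hpt, lintegral_indicator measurableSet_Ioo,
    Measure.restrict_restrict measurableSet_Ioo,
    Set.inter_eq_left.mpr (fun y hy => hy.1)]
  have hcongr : ∀ y ∈ Set.Ioo (0:ℝ) R,
      ENNReal.ofReal (y ^ (d - 1)) * ENNReal.ofReal (y ^ (-((d:ℝ)-1))) = 1 := by
    intro y hy
    rw [← ENNReal.ofReal_mul (pow_nonneg hy.1.le _)]
    have h1 : (y : ℝ) ^ (d - 1) = y ^ ((d:ℝ) - 1) := by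
      rw [← Real.rpow_natCast y (d - 1)]
      congr 1
      push_cast [Nat.cast_sub (by omega : 1 ≤ d)]
      ring
    rw [h1, ← Real.rpow_add hy.1, add_neg_cancel, Real.rpow_zero, ENNReal.ofReal_one]
  rw [setLIntegral_congr_fun measurableSet_Ioo hcongr]
  simp [Real.volume_Ioo, hR.le]

lemma lintegral_compl_aux (d : ℕ) (hd : 3 ≤ d) {R : ℝ} (hR : 0 < R) :
    ∫⁻ x : EuclideanSpace ℝ (Fin d),
        (Set.Ici R).indicator (fun t => ENNReal.ofReal (t ^ (-(2*((d:ℝ)-1))))) ‖x‖ =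
      (volume : Measure (EuclideanSpace ℝ (Fin d))).toSphere Set.univ *
        ENNReal.ofReal (R ^ (2-(d:ℝ)) / ((d:ℝ)-2)) := by
  have hd3 : (3:ℝ) ≤ (d:ℝ) := by exact_mod_cast hd
  have hmeas : Measurable fun t : ℝ => ENNReal.ofReal (t ^ (-(2*((d:ℝ)-1)))) :=
    by fun_prop
  rw [lintegral_norm_aux d (by omega) _ (hmeas.indicator measurableSet_Ici)]
  congr 1
  have hfr : Module.finrank ℝ (EuclideanSpace ℝ (Fin d)) = d := finrank_euclideanSpace_fin
  rw [hfr]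
  have hpt : ∀ y : ℝ, ENNReal.ofReal (y ^ (d - 1)) *
      (Set.Ici R).indicator (fun t => ENNReal.ofReal (t ^ (-(2*((d:ℝ)-1))))) y =
      (Set.Ici R).indicator
        (fun t => ENNReal.ofReal (t ^ (d - 1)) * ENNReal.ofReal (t ^ (-(2*((d:ℝ)-1))))) y := by
    intro y
    by_cases hy : y ∈ Set.Ici R <;> simp [hy]
  rw [lintegral_congr hpt, lintegral_indicator measurableSet_Ici,
    Measure.restrict_restrict measurableSet_Ici,
    show Set.Ici R ∩ Set.Ioi 0 = Set.Ici R from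
      Set.inter_eq_left.mpr (fun y hy => lt_of_lt_of_le hR hy)]
  have hcongr : ∀ y ∈ Set.Ici R,
      ENNReal.ofReal (y ^ (d - 1)) * ENNReal.ofReal (y ^ (-(2*((d:ℝ)-1)))) =
        ENNReal.ofReal (y ^ (-((d:ℝ)-1))) := by
    intro y hy
    have hy0 : 0 < y := lt_of_lt_of_le hR hy
    rw [← ENNReal.ofReal_mul (pow_nonneg hy0.le _)]
    have h1 : (y : ℝ) ^ (d - 1) = y ^ ((d:ℝ) - 1) := by
      rw [← Real.rpow_natCast y (d - 1)]
      congr 1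
      push_cast [Nat.cast_sub (by omega : 1 ≤ d)]
      ring
    rw [h1, ← Real.rpow_add hy0]
    congr 1
    ring
  rw [setLIntegral_congr_fun measurableSet_Ici hcongr]
  have hIoi : (volume : Measure ℝ).restrict (Set.Ici R) = volume.restrict (Set.Ioi R) :=
    (Measure.restrict_congr_set Ioi_ae_eq_Ici).symm
  rw [hIoi]
  have hexp : -((d:ℝ)-1) < -1 := by linarith
  have hint : IntegrableOn (fun y : ℝ => y ^ (-((d:ℝ)-1))) (Set.Ioi R) :=
    integrableOn_Ioi_rpow_of_lt hexp hR
  rw [← ofReal_integral_eq_lintegral_ofReal hint ?_]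
  · rw [integral_Ioi_rpow_of_lt hexp hR]
    congr 1
    have h2 : -((d:ℝ)-1) + 1 = 2 - (d:ℝ) := by ring
    rw [h2]
    rw [div_eq_div_iff (by linarith : (2:ℝ) - (d:ℝ) ≠ 0) (by linarith : (d:ℝ) - 2 ≠ 0)]
    ring
  · filter_upwards [ae_restrict_mem measurableSet_Ioi] with y hy
    exact Real.rpow_nonneg (le_of_lt (lt_trans hR hy)) _


theorem gradient_green_convolution (d : ℕ) (hd : 3 ≤ d) (ν : ℝ) (hν : 0 < ν) :
    ∃ C > 0, ∃ ν' > 0, ∀ y₂ : EuclideanSpace ℝ (Fin d), y₂ ≠ 0 →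
      (∫ y₁ : EuclideanSpace ℝ (Fin d),
          Real.exp (-ν * ‖y₁‖) * ‖y₁‖ ^ (-((d : ℝ) - 1)) *
            (Real.exp (-ν * ‖y₁ - y₂‖) * ‖y₁ - y₂‖ ^ (-((d : ℝ) - 1))))
        ≤ C * Real.exp (-ν' * ‖y₂‖) * (1 + ‖y₂‖ ^ (-((d : ℝ) - 2))) := by
  have hd3 : (3:ℝ) ≤ (d:ℝ) := by exact_mod_cast hd
  set a : ℝ := (d:ℝ) - 1 with ha
  have ha2 : (2:ℝ) ≤ a := by rw [ha]; linarith
  set S := (volume : Measure (EuclideanSpace ℝ (Fin d))).toSphere Set.univ with hS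
  have hSfin : S ≠ ⊤ := measure_ne_top _ _
  set C : ℝ := 4 * (2:ℝ) ^ ((d:ℝ) - 2) * S.toReal + 1 with hC
  have hC0 : 0 < C := by
    have : (0:ℝ) ≤ 4 * (2:ℝ) ^ ((d:ℝ) - 2) * S.toReal := by positivity
    linarith
  refine ⟨C, hC0, ν, hν, ?_⟩
  intro y₂ hy₂
  set r : ℝ := ‖y₂‖ with hr
  have hr0 : 0 < r := norm_pos_iff.mpr hy₂
  set R : ℝ := r / 2 with hRdef
  have hR0 : 0 < R := by positivity
  -- the integrand
  set f : EuclideanSpace ℝ (Fin d) → ℝ := fun y =>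
    Real.exp (-ν * ‖y‖) * ‖y‖ ^ (-a) * (Real.exp (-ν * ‖y - y₂‖) * ‖y - y₂‖ ^ (-a)) with hf
  have hf0 : ∀ y, 0 ≤ f y := fun y => by
    apply mul_nonneg (mul_nonneg (exp_pos _).le (rpow_nonneg (norm_nonneg _) _))
    exact mul_nonneg (exp_pos _).le (rpow_nonneg (norm_nonneg _) _)
  have hfm : Measurable f := by fun_prop
  rw [show (∫ y₁ : EuclideanSpace ℝ (Fin d),
      Real.exp (-ν * ‖y₁‖) * ‖y₁‖ ^ (-((d : ℝ) - 1)) *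
        (Real.exp (-ν * ‖y₁ - y₂‖) * ‖y₁ - y₂‖ ^ (-((d : ℝ) - 1)))) = ∫ y, f y from rfl]
  rw [integral_eq_lintegral_of_nonneg_ae (Filter.Eventually.of_forall hf0)
    hfm.aestronglyMeasurable]
  have hRHS0 : 0 ≤ C * Real.exp (-ν * r) * (1 + r ^ (-((d : ℝ) - 2))) := by positivity
  apply ENNReal.toReal_le_of_le_ofReal hRHS0
  -- auxiliary radial functions
  set F1 : ℝ → ℝ≥0∞ := (Set.Ioo (0:ℝ) R).indicator (fun t => ENNReal.ofReal (t ^ (-a))) with hF1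
  set F2 : ℝ → ℝ≥0∞ := (Set.Ici R).indicator (fun t => ENNReal.ofReal (t ^ (-(2*a)))) with hF2
  have hF1m : Measurable F1 := Measurable.indicator (by fun_prop) measurableSet_Ioo
  have hF2m : Measurable F2 := Measurable.indicator (by fun_prop) measurableSet_Ici
  set g : EuclideanSpace ℝ (Fin d) → ℝ≥0∞ := fun y =>
    ENNReal.ofReal (‖y‖ ^ (-a) * ‖y - y₂‖ ^ (-a)) with hg
  -- step 1 : pull out the exponential
  have step1 : ∀ y, ENNReal.ofReal (f y) ≤ ENNReal.ofReal (Real.exp (-ν * r)) * g y := by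
    intro y
    rw [hg, ← ENNReal.ofReal_mul (exp_pos _).le]
    apply ENNReal.ofReal_le_ofReal
    have htri : r ≤ ‖y‖ + ‖y - y₂‖ := by
      have h := norm_sub_le y (y - y₂)
      simpa using h
    have hexp : Real.exp (-ν * ‖y‖) * Real.exp (-ν * ‖y - y₂‖) ≤ Real.exp (-ν * r) := by
      rw [← Real.exp_add]
      apply Real.exp_le_exp.mpr
      nlinarith
    calc f y = (Real.exp (-ν * ‖y‖) * Real.exp (-ν * ‖y - y₂‖)) *
          (‖y‖ ^ (-a) * ‖y - y₂‖ ^ (-a)) := by rw [hf]; ring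
      _ ≤ Real.exp (-ν * r) * (‖y‖ ^ (-a) * ‖y - y₂‖ ^ (-a)) := by
          apply mul_le_mul_of_nonneg_right hexp
          exact mul_nonneg (rpow_nonneg (norm_nonneg _) _) (rpow_nonneg (norm_nonneg _) _)
  -- step 2 : pointwise domination of g
  have step2 : ∀ y, g y ≤ ENNReal.ofReal (R ^ (-a)) * F1 ‖y‖ +
      ENNReal.ofReal (R ^ (-a)) * F1 ‖y - y₂‖ + F2 ‖y‖ + F2 ‖y - y₂‖ := by
    intro y
    set u : ℝ := ‖y‖ with hu
    set v : ℝ := ‖y - y₂‖ with hv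
    have hu0 : 0 ≤ u := norm_nonneg _
    have hv0 : 0 ≤ v := norm_nonneg _
    have htri : r ≤ u + v := by
      have h := norm_sub_le y (y - y₂)
      simpa using h
    have hane : -a ≠ 0 := by linarith
    have hgy : g y = ENNReal.ofReal (u ^ (-a) * v ^ (-a)) := rfl
    rcases eq_or_lt_of_le hu0 with h0 | hu0
    · have : g y = 0 := by
        rw [hgy, ← h0, Real.zero_rpow hane, zero_mul, ENNReal.ofReal_zero]
      rw [this]; exact zero_le
    rcases eq_or_lt_of_le hv0 with h0 | hv0
    · have : g y = 0 := by
        rw [hgy, ← h0, Real.zero_rpow hane, mul_zero, ENNReal.ofReal_zero]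
      rw [this]; exact zero_le
    rcases le_total u v with huv | huv
    · have hvR : R ≤ v := by rw [hRdef]; linarith
      rcases lt_or_ge u R with huR | huR
      · -- g ≤ c * F1 u
        have h1 : g y ≤ ENNReal.ofReal (R ^ (-a)) * F1 u := by
          rw [hgy, hF1, Set.indicator_of_mem (Set.mem_Ioo.mpr ⟨hu0, huR⟩),
            ← ENNReal.ofReal_mul (rpow_nonneg hR0.le _)]
          apply ENNReal.ofReal_le_ofReal
          rw [mul_comm (R ^ (-a))]
          exact mul_le_mul_of_nonneg_left
            (Real.rpow_le_rpow_of_nonpos hR0 hvR (by linarith)) (rpow_nonneg hu0.le _)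
        exact h1.trans (le_add_right (le_add_right (le_add_right le_rfl)))
      · -- g ≤ F2 u
        have h1 : g y ≤ F2 u := by
          rw [hgy, hF2, Set.indicator_of_mem (Set.mem_Ici.mpr huR)]
          apply ENNReal.ofReal_le_ofReal
          have h2 : v ^ (-a) ≤ u ^ (-a) :=
            Real.rpow_le_rpow_of_nonpos hu0 huv (by linarith)
          calc u ^ (-a) * v ^ (-a) ≤ u ^ (-a) * u ^ (-a) :=
                mul_le_mul_of_nonneg_left h2 (rpow_nonneg hu0.le _)
            _ = u ^ (-(2*a)) := by
                rw [← Real.rpow_add hu0]; congr 1; ring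
        exact h1.trans (le_add_right le_add_self)
    · have huR' : R ≤ u := by rw [hRdef]; linarith
      rcases lt_or_ge v R with hvR | hvR
      · have h1 : g y ≤ ENNReal.ofReal (R ^ (-a)) * F1 v := by
          rw [hgy, hF1, Set.indicator_of_mem (Set.mem_Ioo.mpr ⟨hv0, hvR⟩),
            ← ENNReal.ofReal_mul (rpow_nonneg hR0.le _)]
          apply ENNReal.ofReal_le_ofReal
          exact mul_le_mul_of_nonneg_right
            (Real.rpow_le_rpow_of_nonpos hR0 huR' (by linarith)) (rpow_nonneg hv0.le _)
        exact h1.trans (le_add_right (le_add_right le_add_self))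
      · have h1 : g y ≤ F2 v := by
          rw [hgy, hF2, Set.indicator_of_mem (Set.mem_Ici.mpr hvR)]
          apply ENNReal.ofReal_le_ofReal
          have h2 : u ^ (-a) ≤ v ^ (-a) :=
            Real.rpow_le_rpow_of_nonpos hv0 huv (by linarith)
          calc u ^ (-a) * v ^ (-a) ≤ v ^ (-a) * v ^ (-a) :=
                mul_le_mul_of_nonneg_right h2 (rpow_nonneg hv0.le _)
            _ = v ^ (-(2*a)) := by
                rw [← Real.rpow_add hv0]; congr 1; ring
        exact h1.trans le_add_self
  -- step 3 : integrate the domination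
  have hnm : Measurable fun y : EuclideanSpace ℝ (Fin d) => ‖y - y₂‖ := by fun_prop
  have hA : ∫⁻ y : EuclideanSpace ℝ (Fin d), F1 ‖y‖ = S * ENNReal.ofReal R := by
    rw [hF1, ha, hS]; exact lintegral_ball_aux d hd hR0
  have hB : ∫⁻ y : EuclideanSpace ℝ (Fin d), F2 ‖y‖ =
      S * ENNReal.ofReal (R ^ (2-(d:ℝ)) / ((d:ℝ)-2)) := by
    rw [hF2, ha, hS]; exact lintegral_compl_aux d hd hR0
  have htrans1 : ∫⁻ y : EuclideanSpace ℝ (Fin d), F1 ‖y - y₂‖ =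
      ∫⁻ y : EuclideanSpace ℝ (Fin d), F1 ‖y‖ :=
    lintegral_sub_right_eq_self (fun x => F1 ‖x‖) y₂
  have htrans2 : ∫⁻ y : EuclideanSpace ℝ (Fin d), F2 ‖y - y₂‖ =
      ∫⁻ y : EuclideanSpace ℝ (Fin d), F2 ‖y‖ :=
    lintegral_sub_right_eq_self (fun x => F2 ‖x‖) y₂
  have hgle : ∫⁻ y : EuclideanSpace ℝ (Fin d), g y ≤
      ENNReal.ofReal (4 * S.toReal * R ^ (2-(d:ℝ))) := by
    have hX : ENNReal.ofReal (R ^ (-a)) * (S * ENNReal.ofReal R) =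
        S * ENNReal.ofReal (R ^ (2-(d:ℝ))) := by
      rw [← mul_assoc, mul_comm (ENNReal.ofReal (R ^ (-a))) S, mul_assoc,
        ← ENNReal.ofReal_mul (rpow_nonneg hR0.le _)]
      congr 1
      rw [show R ^ (-a) * R = R ^ (-a) * R ^ (1:ℝ) by rw [Real.rpow_one],
        ← Real.rpow_add hR0]
      congr 1
      rw [ha]; ring
    have hY : ENNReal.ofReal (R ^ (2-(d:ℝ)) / ((d:ℝ)-2)) ≤ ENNReal.ofReal (R ^ (2-(d:ℝ))) :=
      ENNReal.ofReal_le_ofReal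
        (div_le_self (rpow_nonneg hR0.le _) (by linarith : (1:ℝ) ≤ (d:ℝ)-2))
    calc ∫⁻ y : EuclideanSpace ℝ (Fin d), g y
        ≤ ∫⁻ y : EuclideanSpace ℝ (Fin d),
            (ENNReal.ofReal (R ^ (-a)) * F1 ‖y‖ + ENNReal.ofReal (R ^ (-a)) * F1 ‖y - y₂‖ +
              F2 ‖y‖ + F2 ‖y - y₂‖) := lintegral_mono step2
      _ = ENNReal.ofReal (R ^ (-a)) * (∫⁻ y : EuclideanSpace ℝ (Fin d), F1 ‖y‖) +
            ENNReal.ofReal (R ^ (-a)) * (∫⁻ y : EuclideanSpace ℝ (Fin d), F1 ‖y - y₂‖) +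
            (∫⁻ y : EuclideanSpace ℝ (Fin d), F2 ‖y‖) +
            (∫⁻ y : EuclideanSpace ℝ (Fin d), F2 ‖y - y₂‖) := by
          rw [lintegral_add_right (μ := volume) _
              (g := fun y : EuclideanSpace ℝ (Fin d) => F2 ‖y - y₂‖) (hF2m.comp hnm),
            lintegral_add_right (μ := volume) _
              (g := fun y : EuclideanSpace ℝ (Fin d) => F2 ‖y‖) (hF2m.comp measurable_norm),
            lintegral_add_right (μ := volume) _
              (g := fun y : EuclideanSpace ℝ (Fin d) => ENNReal.ofReal (R ^ (-a)) * F1 ‖y - y₂‖)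
              ((hF1m.comp hnm).const_mul _),
            lintegral_const_mul' _ _ ENNReal.ofReal_ne_top,
            lintegral_const_mul' _ _ ENNReal.ofReal_ne_top]
      _ = S * ENNReal.ofReal (R ^ (2-(d:ℝ))) + S * ENNReal.ofReal (R ^ (2-(d:ℝ))) +
            S * ENNReal.ofReal (R ^ (2-(d:ℝ)) / ((d:ℝ)-2)) +
            S * ENNReal.ofReal (R ^ (2-(d:ℝ)) / ((d:ℝ)-2)) := by
          rw [htrans1, htrans2, hA, hB, hX]
      _ ≤ S * ENNReal.ofReal (R ^ (2-(d:ℝ))) + S * ENNReal.ofReal (R ^ (2-(d:ℝ))) +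
            S * ENNReal.ofReal (R ^ (2-(d:ℝ))) + S * ENNReal.ofReal (R ^ (2-(d:ℝ))) := by
          gcongr
      _ = 4 * (S * ENNReal.ofReal (R ^ (2-(d:ℝ)))) := by ring
      _ = ENNReal.ofReal (4 * S.toReal * R ^ (2-(d:ℝ))) := by
          rw [ENNReal.ofReal_mul (by positivity), ENNReal.ofReal_mul (by norm_num),
            ENNReal.ofReal_toReal hSfin, ENNReal.ofReal_ofNat, mul_assoc]
  -- step 4 : put everything together
  have hfinal : Real.exp (-ν * r) * (4 * S.toReal * R ^ (2-(d:ℝ))) ≤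
      C * Real.exp (-ν * r) * (1 + r ^ (-((d:ℝ)-2))) := by
    have hRr : R ^ (2-(d:ℝ)) = 2 ^ ((d:ℝ)-2) * r ^ (-((d:ℝ)-2)) := by
      rw [hRdef, div_eq_mul_inv, Real.mul_rpow hr0.le (by norm_num),
        Real.inv_rpow (by norm_num : (0:ℝ) ≤ 2), ← Real.rpow_neg (by norm_num : (0:ℝ) ≤ 2),
        show -(2-(d:ℝ)) = (d:ℝ)-2 from by ring, show (2:ℝ)-(d:ℝ) = -((d:ℝ)-2) from by ring,
        mul_comm]
    rw [hRr, hC]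
    set X : ℝ := 4 * (2:ℝ) ^ ((d:ℝ)-2) * S.toReal with hXdef
    have hX0 : 0 ≤ X := by positivity
    have hq0 : (0:ℝ) ≤ r ^ (-((d:ℝ)-2)) := rpow_nonneg hr0.le _
    have he0 : (0:ℝ) < Real.exp (-ν * r) := exp_pos _
    set q : ℝ := r ^ (-((d:ℝ)-2))
    set e : ℝ := Real.exp (-ν * r)
    have hexpand : Real.exp (-ν * r) * (4 * S.toReal * (2 ^ ((d:ℝ)-2) * q)) = X * e * q := by
      rw [hXdef]; ring
    rw [hexpand]
    nlinarith [mul_nonneg (mul_nonneg hX0 he0.le) hq0, mul_nonneg hq0 he0.le,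
      mul_nonneg hX0 he0.le]
  calc ∫⁻ y, ENNReal.ofReal (f y)
      ≤ ∫⁻ y, ENNReal.ofReal (Real.exp (-ν * r)) * g y := lintegral_mono step1
    _ = ENNReal.ofReal (Real.exp (-ν * r)) * ∫⁻ y, g y :=
        lintegral_const_mul' _ _ ENNReal.ofReal_ne_top
    _ ≤ ENNReal.ofReal (Real.exp (-ν * r)) *
          ENNReal.ofReal (4 * S.toReal * R ^ (2-(d:ℝ))) := by gcongr
    _ = ENNReal.ofReal (Real.exp (-ν * r) * (4 * S.toReal * R ^ (2-(d:ℝ)))) :=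
        (ENNReal.ofReal_mul (exp_pos _).le).symm
    _ ≤ ENNReal.ofReal (C * Real.exp (-ν * r) * (1 + r ^ (-((d:ℝ)-2)))) :=
        ENNReal.ofReal_le_ofReal hfinal
end
end
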